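/- arXiv:1512.03824 — 4 statements merged into one kernel-verified Lean document; each statement's English description precedes it below -/
import Mathlib

section
/- For every n ≥ 1, the subgroup of the symmetric group on F_3^n generated by the permutations induced by the gates S_{1,2} (acting as x ↦ 2x on a single coordinate), X (acting as x ↦ x+1 on a single coordinate), and SUM (acting as (x,y) ↦ (x, x+y) on an ordered pair of distinct coordinates), taken over all choices of coordinates, is isomorphic to the semidirect product GL(n, F_3) ⋉ F_3^n (the affine general linear group of degree n over F_3). -/
def s12Fun (n : ℕ) (i : Fin n) (x : Fin n → ZMod 3) : Fin n → ZMod 3 :=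
  Function.update x i (2 * x i)

lemma s12Fun_invol (n : ℕ) (i : Fin n) (x : Fin n → ZMod 3) :
    s12Fun n i (s12Fun n i x) = x := by
  funext j
  rcases eq_or_ne j i with rfl | h
  · simp only [s12Fun, Function.update_self]
    rw [← mul_assoc, show (2 : ZMod 3) * 2 = 1 by decide, one_mul]
  · simp [s12Fun, Function.update_of_ne h]

/-- The gate `S_{1,2}` acting on coordinate `i`: `x ↦ 2x` on that coordinate
(and the identity elsewhere), as a permutation of `F₃ⁿ`. -/
def s12Gate (n : ℕ) (i : Fin n) : Equiv.Perm (Fin n → ZMod 3) :=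
  ⟨s12Fun n i, s12Fun n i, s12Fun_invol n i, s12Fun_invol n i⟩

def xFun (n : ℕ) (i : Fin n) (c : ZMod 3) (x : Fin n → ZMod 3) : Fin n → ZMod 3 :=
  Function.update x i (x i + c)

lemma xFun_inv (n : ℕ) (i : Fin n) (c : ZMod 3) (x : Fin n → ZMod 3) :
    xFun n i (-c) (xFun n i c x) = x := by
  funext j
  rcases eq_or_ne j i with rfl | h
  · simp [xFun, Function.update_self]
  · simp [xFun, Function.update_of_ne h]

/-- The gate `X` acting on coordinate `i`: `x ↦ x + 1` on that coordinate
(and the identity elsewhere), as a permutation of `F₃ⁿ`. -/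
def xGate (n : ℕ) (i : Fin n) : Equiv.Perm (Fin n → ZMod 3) :=
  ⟨xFun n i 1, xFun n i (-1), fun x => by simpa using xFun_inv n i 1 x, fun x => by
    have := xFun_inv n i (-1) x
    simpa using this⟩

def sumFun (n : ℕ) (i j : Fin n) (s : ZMod 3) (x : Fin n → ZMod 3) : Fin n → ZMod 3 :=
  Function.update x j (x j + s * x i)

lemma sumFun_inv (n : ℕ) (i j : Fin n) (h : i ≠ j) (s : ZMod 3) (x : Fin n → ZMod 3) :
    sumFun n i j (-s) (sumFun n i j s x) = x := by
  funext m
  rcases eq_or_ne m j with rfl | hm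
  · simp [sumFun, Function.update_self, Function.update_of_ne h]
  · simp [sumFun, Function.update_of_ne hm]

/-- The gate `SUM` with control coordinate `i` and target coordinate `j ≠ i`:
`(x_i, x_j) ↦ (x_i, x_i + x_j)` (and the identity elsewhere), as a
permutation of `F₃ⁿ`. -/
def sumGate (n : ℕ) (i j : Fin n) (h : i ≠ j) : Equiv.Perm (Fin n → ZMod 3) :=
  ⟨sumFun n i j 1, sumFun n i j (-1), fun x => by simpa using sumFun_inv n i j h 1 x, fun x => by
    have := sumFun_inv n i j h (-1) x
    simpa using this⟩

/-- The set of all classical ternary gates `S_{1,2}`, `X`, `SUM` acting on the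
coordinates of `F₃ⁿ`. -/
def gateSet (n : ℕ) : Set (Equiv.Perm (Fin n → ZMod 3)) :=
  {e | (∃ i, e = s12Gate n i) ∨ (∃ i, e = xGate n i) ∨
    ∃ i j, ∃ h : i ≠ j, e = sumGate n i j h}

/-- The action of `GL(n, F₃)` on `F₃ⁿ` (written multiplicatively) by
matrix-vector multiplication, as a homomorphism into the automorphism group. -/
def glAut (n : ℕ) : GL (Fin n) (ZMod 3) →* MulAut (Multiplicative (Fin n → ZMod 3)) where
  toFun A :=
    { toFun := fun v => Multiplicative.ofAdd
        ((A : Matrix (Fin n) (Fin n) (ZMod 3)).mulVec v.toAdd)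
      invFun := fun v => Multiplicative.ofAdd
        (((A⁻¹ : GL (Fin n) (ZMod 3)) : Matrix (Fin n) (Fin n) (ZMod 3)).mulVec v.toAdd)
      left_inv := fun v => by
        simp only [toAdd_ofAdd, Matrix.mulVec_mulVec, Units.inv_mul, Matrix.one_mulVec,
          ofAdd_toAdd]
      right_inv := fun v => by
        simp only [toAdd_ofAdd, Matrix.mulVec_mulVec, Units.mul_inv, Matrix.one_mulVec,
          ofAdd_toAdd]
      map_mul' := fun v w => by
        simp only [toAdd_mul, Matrix.mulVec_add, ofAdd_add] }
  map_one' := by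
    ext v
    simp [Matrix.one_mulVec]
  map_mul' := fun A B => by
    ext v
    simp [Matrix.mulVec_mulVec, Units.val_mul]

/-! The affine action `(b, A) ↦ (x ↦ A x + b)` embeds `F₃ⁿ ⋊ GL(n, F₃)` into the symmetric
group of `F₃ⁿ`, so it suffices to show that its image is generated by the gates. Each gate is
affine: `X` is the translation by a basis vector, `S_{1,2}` the diagonal matrix with a single
entry `2 = -1`, and `SUM` an elementary transvection. Conversely, translations are sums of
basis vectors, and by Gaussian elimination every invertible matrix is a product of
transvections and an invertible diagonal matrix; over `F₃` a transvection with coefficient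
`c` is the `c`-th power of the one with coefficient `1`, and `-1` is the only unit besides `1`.
-/

open Matrix

namespace Matrix

variable {n R : Type*} [DecidableEq n] [Fintype n] [CommRing R]

theorem transvection_pow {i j : n} (h : i ≠ j) (c : R) (k : ℕ) :
    transvection i j c ^ k = transvection i j (k * c) := by
  induction k with
  | zero => simp [transvection_zero]
  | succ k ih =>
    rw [pow_succ, ih, transvection_mul_transvection_same _ _ h]
    push_cast
    ring_nf

theorem transvection_mulVec {i j : n} (h : i ≠ j) (c : R) (x : n → R) :
    transvection i j c *ᵥ x = Function.update x i (x i + c * x j) := by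
  ext k
  rcases eq_or_ne k i with rfl | hk
  · simp [transvection, add_mulVec, single_mulVec]
  · simp [transvection, add_mulVec, single_mulVec, hk]

def TransvectionStruct.toGL (t : TransvectionStruct n R) : GL n R :=
  ⟨t.toMatrix, t.inv.toMatrix, t.mul_inv, t.inv_mul⟩

theorem TransvectionStruct.toGL_eq_pow {m : ℕ} [NeZero m] (t : TransvectionStruct n (ZMod m)) :
    t.toGL = (⟨t.i, t.j, t.hij, 1⟩ : TransvectionStruct n (ZMod m)).toGL ^ t.c.val := by
  ext : 1
  rw [Units.val_pow_eq_pow_val]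
  change transvection t.i t.j t.c = transvection t.i t.j 1 ^ t.c.val
  rw [transvection_pow t.hij, ZMod.natCast_zmod_val, mul_one]

variable (n R) in
def diagonalUnits : (n → Rˣ) →* GL n R :=
  (Units.map (diagonalRingHom n R).toMonoidHom).comp MulEquiv.piUnits.symm.toMonoidHom

theorem coe_diagonalUnits (u : n → Rˣ) :
    (diagonalUnits n R u : Matrix n n R) = diagonal fun i => (u i : R) := rfl

theorem diagonalUnits_mem_of_mulSingle_mem {S : Subgroup (GL n R)}
    (h : ∀ i (c : Rˣ), diagonalUnits n R (Pi.mulSingle i c) ∈ S) (u : n → Rˣ) :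
    diagonalUnits n R u ∈ S := by
  change u ∈ S.comap (diagonalUnits n R)
  rw [← Finset.univ_prod_mulSingle u]
  exact Subgroup.prod_mem _ fun i _ => h i (u i)

theorem GeneralLinearGroup.eq_top_of_diagonalUnits_mem_of_transvection_mem {K : Type*} [Field K]
    {S : Subgroup (GL n K)} (hdiag : ∀ u, diagonalUnits n K u ∈ S)
    (htransv : ∀ t : TransvectionStruct n K, t.toGL ∈ S) : S = ⊤ := by
  suffices key : ∀ M : Matrix n n K, (hM : M.det ≠ 0) → GeneralLinearGroup.mkOfDetNeZero M hM ∈ S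
    from eq_top_iff.2 fun A _ => by
      convert key A A.det_ne_zero
      exact Units.ext rfl
  intro M hM
  refine diagonal_transvection_induction_of_det_ne_zero
    (fun M => ∀ hM : M.det ≠ 0, GeneralLinearGroup.mkOfDetNeZero M hM ∈ S) M hM ?_ ?_ ?_ hM
  · intro D hD _
    have hD' : ∀ i, D i ≠ 0 := by simpa [Finset.prod_ne_zero_iff] using hD
    convert hdiag fun i => Units.mk0 (D i) (hD' i)
    exact Units.ext rfl
  · intro t _
    convert htransv t
    exact Units.ext rfl
  · intro A B hA hB hAS hBS _
    convert mul_mem (hAS hA) (hBS hB)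
    exact Units.ext rfl

end Matrix

theorem AddSubgroup.eq_top_of_single_one_mem {ι : Type*} [Fintype ι] [DecidableEq ι] {m : ℕ}
    [NeZero m] {S : AddSubgroup (ι → ZMod m)} (h : ∀ i, Pi.single i 1 ∈ S) : S = ⊤ := by
  refine eq_top_iff.2 fun v _ => ?_
  rw [← Finset.univ_sum_single v]
  refine sum_mem fun i _ => ?_
  rw [← ZMod.natCast_zmod_val (v i), ← nsmul_one, Pi.single_smul]
  exact nsmul_mem (h i) _

theorem ZMod.units_three_eq_one_or_neg_one (c : (ZMod 3)ˣ) : c = 1 ∨ c = -1 := by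
  revert c
  decide

section AffineAction

variable {n : ℕ}

variable (n) in
def affinePerm :
    Multiplicative (Fin n → ZMod 3) ⋊[glAut n] GL (Fin n) (ZMod 3) →* Equiv.Perm (Fin n → ZMod 3) :=
  SemidirectProduct.lift (MulAction.toPermHom _ _) (MulAction.toPermHom _ _) fun A => by
    refine MonoidHom.ext fun b => Equiv.ext fun x => ?_
    change (A : Matrix (Fin n) (Fin n) (ZMod 3)) *ᵥ b.toAdd + x =
      (A : Matrix (Fin n) (Fin n) (ZMod 3)) *ᵥ (b.toAdd + (A⁻¹ : GL (Fin n) (ZMod 3)) • x)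
    rw [mulVec_add]
    exact congrArg (_ + ·) (smul_inv_smul A x).symm

theorem affinePerm_apply (p : Multiplicative (Fin n → ZMod 3) ⋊[glAut n] GL (Fin n) (ZMod 3))
    (x : Fin n → ZMod 3) :
    affinePerm n p x = p.left.toAdd + (p.right : Matrix (Fin n) (Fin n) (ZMod 3)) *ᵥ x := rfl

theorem affinePerm_injective : Function.Injective (affinePerm n) := by
  refine (injective_iff_map_eq_one _).2 fun p hp => ?_
  have hfix : ∀ x, p.left.toAdd + (p.right : Matrix (Fin n) (Fin n) (ZMod 3)) *ᵥ x = x :=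
    fun x => (affinePerm_apply p x).symm.trans (Equiv.ext_iff.1 hp x)
  have hleft : p.left = 1 := by simpa using hfix 0
  have hright : p.right = 1 := Units.ext <| ext_of_mulVec_single fun i => by
    have := hfix (Pi.single i 1)
    rw [hleft, toAdd_one, zero_add] at this
    rw [this, Units.val_one, one_mulVec]
  exact SemidirectProduct.ext hleft hright

theorem affinePerm_inl_single (i : Fin n) :
    affinePerm n (.inl (.ofAdd (Pi.single i 1))) = xGate n i := by
  ext x j
  rcases eq_or_ne j i with rfl | hj
  · simp [affinePerm_apply, xGate, xFun, add_comm]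
  · simp [affinePerm_apply, xGate, xFun, hj]

theorem affinePerm_inr_diagonalUnits_neg_one (i : Fin n) :
    affinePerm n (.inr (diagonalUnits _ _ (Pi.mulSingle i (-1)))) = s12Gate n i := by
  ext x j
  rcases eq_or_ne j i with rfl | hj
  · simp [affinePerm_apply, coe_diagonalUnits, mulVec_diagonal, s12Gate, s12Fun,
      show (2 : ZMod 3) = -1 by decide]
  · simp [affinePerm_apply, coe_diagonalUnits, mulVec_diagonal, s12Gate, s12Fun, hj]

theorem affinePerm_inr_transvection {i j : Fin n} (h : i ≠ j) :
    affinePerm n (.inr (⟨i, j, h, 1⟩ : TransvectionStruct (Fin n) (ZMod 3)).toGL) =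
      sumGate n j i h.symm := by
  ext x : 1
  simp [affinePerm_apply, TransvectionStruct.toGL, transvection_mulVec h, sumGate, sumFun]

theorem gateSet_subset_range : gateSet n ⊆ (affinePerm n).range := by
  rintro e (⟨i, rfl⟩ | ⟨i, rfl⟩ | ⟨i, j, h, rfl⟩)
  · exact ⟨_, affinePerm_inr_diagonalUnits_neg_one i⟩
  · exact ⟨_, affinePerm_inl_single i⟩
  · exact ⟨_, affinePerm_inr_transvection h.symm⟩

theorem comap_closure_gateSet_eq_top :
    (Subgroup.closure (gateSet n)).comap (affinePerm n) = ⊤ := by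
  set H := (Subgroup.closure (gateSet n)).comap (affinePerm n)
  have gate_mem {e} (he : e ∈ gateSet n) {p} (hp : affinePerm n p = e) : p ∈ H := by
    rw [Subgroup.mem_comap, hp]
    exact Subgroup.subset_closure he
  have translations : (H.comap SemidirectProduct.inl).toAddSubgroup' = ⊤ :=
    AddSubgroup.eq_top_of_single_one_mem fun i =>
      gate_mem (Or.inr (Or.inl ⟨i, rfl⟩)) (affinePerm_inl_single i)
  have linear : H.comap SemidirectProduct.inr = ⊤ := by
    refine GeneralLinearGroup.eq_top_of_diagonalUnits_mem_of_transvection_mem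
      (diagonalUnits_mem_of_mulSingle_mem fun i c => ?_) fun t => ?_
    · rcases ZMod.units_three_eq_one_or_neg_one c with rfl | rfl
      · simp
      · exact gate_mem (Or.inl ⟨i, rfl⟩) (affinePerm_inr_diagonalUnits_neg_one i)
    · have hgen : SemidirectProduct.inr (⟨t.i, t.j, t.hij, 1⟩ : TransvectionStruct _ _).toGL ∈ H :=
        gate_mem (e := sumGate n t.j t.i t.hij.symm)
          (Or.inr (Or.inr ⟨t.j, t.i, t.hij.symm, rfl⟩)) (affinePerm_inr_transvection t.hij)
      rw [Subgroup.mem_comap, t.toGL_eq_pow, map_pow]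
      exact pow_mem hgen _
  refine eq_top_iff.2 fun p _ => ?_
  rw [← SemidirectProduct.inl_left_mul_inr_right p]
  exact mul_mem (translations.ge (AddSubgroup.mem_top p.left.toAdd))
    (linear.ge (Subgroup.mem_top p.right))

theorem range_affinePerm : (affinePerm n).range = Subgroup.closure (gateSet n) :=
  le_antisymm
    (by rw [MonoidHom.range_eq_map, Subgroup.map_le_iff_le_comap, comap_closure_gateSet_eq_top])
    ((Subgroup.closure_le _).2 gateSet_subset_range)

end AffineAction

theorem closure_gateSet_iso_affineGroup_general (n : ℕ) :
    Nonempty ((Subgroup.closure (gateSet n)) ≃*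
      Multiplicative (Fin n → ZMod 3) ⋊[glAut n] GL (Fin n) (ZMod 3)) :=
  ⟨(MulEquiv.subgroupCongr range_affinePerm.symm).trans
    (MonoidHom.ofInjective affinePerm_injective).symm⟩

/-- For every `n ≥ 1`, the subgroup of the symmetric group on `F₃ⁿ` generated by
the permutations induced by the gates `S_{1,2}`, `X` and `SUM` (over all choices
of coordinates) is isomorphic to the semidirect product `GL(n, F₃) ⋉ F₃ⁿ`. -/
theorem closure_gateSet_iso_affineGroup (n : ℕ) (hn : 1 ≤ n) :
    Nonempty ((Subgroup.closure (gateSet n)) ≃*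
      Multiplicative (Fin n → ZMod 3) ⋊[glAut n] GL (Fin n) (ZMod 3)) :=
  closure_gateSet_iso_affineGroup_general n
end

section
/- For every n ≥ 1, the subgroup of the symmetric group on F_3^n generated by all coordinate-wise applications of the gates S_{1,2}, X, and SUM equals exactly the group of affine permutations of F_3^n, i.e., a permutation π of F_3^n lies in this subgroup if and only if there exist A ∈ GL(n, F_3) and v ∈ F_3^n such that π(x) = A·x + v for all x ∈ F_3^n. -/
/-! The gates are affine, so they generate a subgroup of the affine group. Conversely, an affine
permutation is a translation composed with an invertible linear map. The `X` gates give every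
translation, since the unit vectors generate `F₃ⁿ` additively. The `S_{1,2}` gates give every
invertible diagonal matrix, since `F₃ˣ = {1, 2}`, and the `SUM` gates give every transvection;
together these generate `GL(n, F₃)`. -/

open Matrix

section Affine

variable {ι R : Type*} [Fintype ι] [DecidableEq ι] [CommRing R]

theorem Matrix.diagonal_mulSingle_mulVec (i : ι) (c : R) (x : ι → R) :
    diagonal (Pi.mulSingle i c) *ᵥ x = Function.update x i (c * x i) := by
  ext j
  rcases eq_or_ne j i with rfl | hj
  · simp [mulVec_diagonal]
  · simp [mulVec_diagonal, hj]

theorem Matrix.transvection_mulVec_s1 (i j : ι) (c : R) (x : ι → R) :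
    transvection i j c *ᵥ x = Function.update x i (x i + c * x j) := by
  ext k
  rcases eq_or_ne k i with rfl | hk
  · simp [transvection, add_mulVec, single_mulVec]
  · simp [transvection, add_mulVec, single_mulVec, hk]

variable (ι R) in
def affineSubgroup : Subgroup (Equiv.Perm (ι → R)) where
  carrier := {π | ∃ (A : GL ι R) (v : ι → R), ∀ x, π x = A • x + v}
  one_mem' := ⟨1, 0, fun x => by simp⟩
  mul_mem' := by
    rintro π σ ⟨A, v, hπ⟩ ⟨B, w, hσ⟩
    refine ⟨A * B, A • w + v, fun x => ?_⟩
    rw [Equiv.Perm.mul_apply, hσ, hπ, smul_add, mul_smul, add_assoc]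
  inv_mem' := by
    rintro π ⟨A, v, hπ⟩
    refine ⟨A⁻¹, -(A⁻¹ • v), fun y => π.injective ?_⟩
    rw [Equiv.Perm.coe_inv, Equiv.apply_symm_apply, hπ, smul_add, smul_neg, smul_inv_smul,
      smul_inv_smul, neg_add_cancel_right]

theorem mem_affineSubgroup_of_isUnit {π : Equiv.Perm (ι → R)} {M : Matrix ι ι R} (hM : IsUnit M)
    (v : ι → R) (hπ : ∀ x, π x = M *ᵥ x + v) : π ∈ affineSubgroup ι R :=
  ⟨hM.unit, v, hπ⟩

def realizedMatrices (G : Subgroup (Equiv.Perm (ι → R))) : Submonoid (Matrix ι ι R) where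
  carrier := {M | ∃ e ∈ G, ⇑e = (M *ᵥ ·)}
  one_mem' := ⟨1, G.one_mem, by ext; simp⟩
  mul_mem' := by
    rintro M N ⟨e, he, hM⟩ ⟨f, hf, hN⟩
    exact ⟨e * f, G.mul_mem he hf, by ext; simp [hM, hN, mulVec_mulVec]⟩

end Affine

section Gates

variable {n : ℕ}

theorem s12Gate_apply (i : Fin n) (x : Fin n → ZMod 3) :
    s12Gate n i x = diagonal (Pi.mulSingle i 2) *ᵥ x :=
  (diagonal_mulSingle_mulVec i 2 x).symm

theorem xGate_eq_addRight (i : Fin n) : xGate n i = Equiv.addRight (Pi.single i 1) := by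
  ext x j
  rcases eq_or_ne j i with rfl | hj
  · simp [xGate, xFun]
  · simp [xGate, xFun, hj]

theorem sumGate_apply (i j : Fin n) (h : i ≠ j) (x : Fin n → ZMod 3) :
    sumGate n i j h x = transvection j i 1 *ᵥ x := by
  rw [transvection_mulVec_s1]
  rfl

theorem gateSet_subset_affineSubgroup : gateSet n ⊆ affineSubgroup (Fin n) (ZMod 3) := by
  rintro e (⟨i, rfl⟩ | ⟨i, rfl⟩ | ⟨i, j, h, rfl⟩)
  · have h2 : IsUnit (2 : ZMod 3) := by decide
    have hD : IsUnit (Pi.mulSingle i 2 : Fin n → ZMod 3) :=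
      h2.map (MonoidHom.mulSingle (fun _ => ZMod 3) i)
    exact mem_affineSubgroup_of_isUnit (isUnit_diagonal.2 hD) 0
      fun x => by rw [s12Gate_apply, add_zero]
  · exact mem_affineSubgroup_of_isUnit isUnit_one (Pi.single i 1)
      fun x => by rw [xGate_eq_addRight, one_mulVec, Equiv.coe_addRight]
  · have hdet : IsUnit (transvection j i (1 : ZMod 3)).det := by
      rw [det_transvection_of_ne _ _ h.symm]
      exact isUnit_one
    exact mem_affineSubgroup_of_isUnit ((isUnit_iff_isUnit_det _).2 hdet) 0
      fun x => by rw [sumGate_apply, add_zero]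

theorem addRight_mem_closure_gateSet (v : Fin n → ZMod 3) :
    Equiv.addRight v ∈ Subgroup.closure (gateSet n) := by
  induction v using Pi.single_induction with
  | zero => simp
  | add v w hv hw => simpa only [Equiv.addRight_add] using mul_mem hw hv
  | single i c =>
    have hx : xGate n i ∈ Subgroup.closure (gateSet n) :=
      Subgroup.subset_closure (Or.inr (Or.inl ⟨i, rfl⟩))
    rw [← ZMod.natCast_zmod_val c, ← nsmul_one, Pi.single_smul, ← Equiv.nsmul_addRight,
      ← xGate_eq_addRight]
    exact pow_mem hx _

theorem diagonal_mem_realizedMatrices (D : Fin n → ZMod 3) (hD : ∀ i, D i ≠ 0) :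
    diagonal D ∈ realizedMatrices (Subgroup.closure (gateSet n)) := by
  induction D using Pi.mulSingle_induction with
  | one => simp
  | mul D E hD' hE' =>
    rw [Pi.mul_def, ← diagonal_mul_diagonal]
    exact mul_mem (hD' fun i => left_ne_zero_of_mul (hD i))
      (hE' fun i => right_ne_zero_of_mul (hD i))
  | mulSingle i c =>
    have hc : ∀ c : ZMod 3, c ≠ 0 → c = 1 ∨ c = 2 := by decide
    rcases hc c (by simpa using hD i) with rfl | rfl
    · simp
    · exact ⟨s12Gate n i, Subgroup.subset_closure (Or.inl ⟨i, rfl⟩), funext (s12Gate_apply i)⟩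

theorem transvection_mem_realizedMatrices (i j : Fin n) (h : i ≠ j) (c : ZMod 3) :
    transvection i j c ∈ realizedMatrices (Subgroup.closure (gateSet n)) := by
  have hsum : transvection i j 1 ∈ realizedMatrices (Subgroup.closure (gateSet n)) :=
    ⟨sumGate n j i h.symm, Subgroup.subset_closure (Or.inr (Or.inr ⟨j, i, h.symm, rfl⟩)),
      funext (sumGate_apply j i h.symm)⟩
  rw [← ZMod.natCast_zmod_val c]
  induction c.val with
  | zero => simp
  | succ k ih =>
    rw [Nat.cast_succ, ← transvection_mul_transvection_same i j h]
    exact mul_mem ih hsum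

theorem toPerm_mem_closure_gateSet (A : GL (Fin n) (ZMod 3)) :
    MulAction.toPerm A ∈ Subgroup.closure (gateSet n) := by
  have hA : (A : Matrix (Fin n) (Fin n) (ZMod 3)) ∈
      realizedMatrices (Subgroup.closure (gateSet n)) :=
    diagonal_transvection_induction_of_det_ne_zero _ _
      ((isUnit_iff_isUnit_det _).1 A.isUnit).ne_zero
      (fun D hD => diagonal_mem_realizedMatrices D
        (by simpa only [det_diagonal, Finset.prod_ne_zero_iff, Finset.mem_univ, true_imp_iff]
          using hD))
      (fun t => transvection_mem_realizedMatrices t.i t.j t.hij t.c)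
      (fun _ _ _ _ => mul_mem)
  obtain ⟨e, he, hAe⟩ := hA
  rwa [show MulAction.toPerm A = e from Equiv.ext fun x => (congrFun hAe x).symm]

end Gates

theorem closure_gateSet_eq_affine_general (n : ℕ) (π : Equiv.Perm (Fin n → ZMod 3)) :
    π ∈ Subgroup.closure (gateSet n) ↔
      ∃ (A : GL (Fin n) (ZMod 3)) (v : Fin n → ZMod 3),
        ∀ x, π x = (A : Matrix (Fin n) (Fin n) (ZMod 3)).mulVec x + v := by
  constructor
  · exact fun hπ => (Subgroup.closure_le _).2 gateSet_subset_affineSubgroup hπ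
  · rintro ⟨A, v, hπ⟩
    have : π = Equiv.addRight v * MulAction.toPerm A := Equiv.ext hπ
    rw [this]
    exact mul_mem (addRight_mem_closure_gateSet v) (toPerm_mem_closure_gateSet A)

/-- For every `n ≥ 1`, the subgroup of the symmetric group on `F₃ⁿ` generated by
all coordinate-wise applications of the gates `S_{1,2}`, `X` and `SUM` is exactly
the group of affine permutations: a permutation `π` lies in it iff there are
`A ∈ GL(n, F₃)` and `v ∈ F₃ⁿ` with `π x = A ⬝ x + v` for all `x`. -/
theorem closure_gateSet_eq_affine (n : ℕ) (hn : 1 ≤ n) (π : Equiv.Perm (Fin n → ZMod 3)) :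
    π ∈ Subgroup.closure (gateSet n) ↔
      ∃ (A : GL (Fin n) (ZMod 3)) (v : Fin n → ZMod 3),
        ∀ x, π x = (A : Matrix (Fin n) (Fin n) (ZMod 3)).mulVec x + v :=
  closure_gateSet_eq_affine_general n π
end

section
/- For every natural number n ≥ 1, the sum over i from 1 to ⌊log₂ n⌋ + 1 of ⌊n/2^i − 1/2⌋ (equivalently, of ⌊(n − 2^{i−1}) / 2^i⌋) equals n − ⌊log₂ n⌋ − 1. -/
/-!
Each summand is one less than the difference of consecutive binary truncations:
`⌊(n - 2^j) / 2^(j+1)⌋ + 1 = ⌊n / 2^j⌋ - ⌊n / 2^(j+1)⌋` whenever `2^j ≤ n`. Adding `1` to each of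
the `⌊log₂ n⌋ + 1` summands therefore makes the sum telescope to `n - ⌊n / 2^(⌊log₂ n⌋ + 1)⌋ = n`.
-/

open Finset

theorem Finset.sum_range_tsub_of_antitone {f : ℕ → ℕ} (hf : Antitone f) (K : ℕ) :
    ∑ j ∈ range K, (f j - f (j + 1)) = f 0 - f K := by
  induction K with
  | zero => simp
  | succ K ih =>
    have hstep : f (K + 1) ≤ f K := hf K.le_succ
    have hfirst : f K ≤ f 0 := hf K.zero_le
    rw [sum_range_succ, ih]
    omega

theorem Nat.sub_div_mul_two_add_one {n d : ℕ} (hd : 0 < d) (hdn : d ≤ n) :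
    (n - d) / (d * 2) + 1 = n / d - n / (d * 2) := by
  have hsub : (n - d) / d = n / d - 1 := by simpa using Nat.sub_mul_div n d 1
  have hpos : 1 ≤ n / d := (Nat.one_le_div_iff hd).2 hdn
  rw [← Nat.div_div_eq_div_mul, ← Nat.div_div_eq_div_mul, hsub]
  omega

/-- For every `n ≥ 1`, the sum over `i` from `1` to `⌊log₂ n⌋ + 1` of
`⌊(n - 2^(i-1)) / 2^i⌋` (which equals `⌊n/2^i - 1/2⌋`) is `n - ⌊log₂ n⌋ - 1`. -/
theorem sum_floor_shifted_div_two_pow (n : ℕ) (hn : 1 ≤ n) :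
    ∑ i ∈ Finset.Icc 1 (Nat.log 2 n + 1), (n - 2 ^ (i - 1)) / 2 ^ i
      = n - Nat.log 2 n - 1 := by
  set L := Nat.log 2 n
  have hshift : ∑ i ∈ Icc 1 (L + 1), (n - 2 ^ (i - 1)) / 2 ^ i
      = ∑ j ∈ range (L + 1), (n - 2 ^ j) / (2 ^ j * 2) := by
    rw [← Ico_add_one_right_eq_Icc, sum_Ico_eq_sum_range]
    simp [add_comm 1, pow_succ]
  have hterm : ∀ j ∈ range (L + 1), (n - 2 ^ j) / (2 ^ j * 2) + 1 = n / 2 ^ j - n / 2 ^ (j + 1) :=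
    fun j hj => pow_succ 2 j ▸ Nat.sub_div_mul_two_add_one (by positivity)
      (Nat.pow_le_of_le_log (by omega) (Nat.lt_succ_iff.1 (mem_range.1 hj)))
  have htelescope := sum_range_tsub_of_antitone (f := fun j => n / 2 ^ j)
    (fun _ _ hij => Nat.div_le_div_left (Nat.pow_le_pow_right two_pos hij) (by positivity)) (L + 1)
  have hvanish : n / 2 ^ (L + 1) = 0 := Nat.div_eq_of_lt (Nat.lt_pow_succ_log_self one_lt_two n)
  rw [← sum_congr rfl hterm, sum_add_distrib, hvanish] at htelescope
  simp only [sum_const, card_range, smul_eq_mul, mul_one, pow_zero, Nat.div_one,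
    Nat.sub_zero] at htelescope
  rw [hshift]
  omega
end

section
/- Let a, b < 3^n be natural numbers, let s = (a + b) mod 3^n, and let s′ = 3^n − 1 − s be the tritwise complement of s. Then for every 0 ≤ i ≤ n − 1, the i-th carry arising in the addition of s′ and a equals the i-th carry arising in the addition of a and b: c_i(s′, a) = c_i(a, b). -/
/-- The `i`-th carry in the tritwise addition of `a` and `b`. -/
def carry (a b i : ℕ) : ℕ := (a % 3 ^ i + b % 3 ^ i) / 3 ^ i

lemma compl_mod (n i s : ℕ) (hin : i ≤ n) (hs : s < 3 ^ n) :
    (3 ^ n - 1 - s) % 3 ^ i = 3 ^ i - 1 - s % 3 ^ i := by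
  set p := 3 ^ i with hp
  set K := 3 ^ (n - i) with hK
  have hP : (3:ℕ) ^ n = p * K := by rw [hp, hK, ← pow_add]; congr 1; omega
  have hp1 : 1 ≤ p := Nat.one_le_pow _ _ (by norm_num)
  have hK1 : 1 ≤ K := Nat.one_le_pow _ _ (by norm_num)
  set r := s % p with hr
  set q := s / p with hq
  have hrp : r < p := Nat.mod_lt _ (by omega)
  have hsq : p * q + r = s := Nat.div_add_mod s p
  have hqK : q < K := by
    rw [hq]
    exact Nat.div_lt_of_lt_mul (by rw [← hP]; exact hs)
  have key : 3 ^ n - 1 - s = (p - 1 - r) + p * (K - 1 - q) := by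
    have h1 : (K - 1 - q) + q + 1 = K := by omega
    have h2 : p * ((K - 1 - q) + q + 1) = p * K := by rw [h1]
    rw [Nat.mul_add, Nat.mul_add, Nat.mul_one] at h2
    omega
  rw [key, Nat.add_mul_mod_self_left, Nat.mod_eq_of_lt (by omega)]

/-- Let `a, b < 3^n`, `s = (a + b) mod 3^n`, and `s′ = 3^n - 1 - s` the tritwise
complement of `s`. Then for every `0 ≤ i ≤ n - 1`, the `i`-th carry of the
addition of `s′` and `a` equals the `i`-th carry of the addition of `a` and `b`. -/
theorem carry_complement_sum (n a b : ℕ) (ha : a < 3 ^ n) (hb : b < 3 ^ n)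
    (i : ℕ) (hi : i ≤ n - 1) :
    carry (3 ^ n - 1 - (a + b) % 3 ^ n) a i = carry a b i := by
  rcases Nat.eq_zero_or_pos n with hn | hn
  · subst hn
    interval_cases a
    interval_cases b
    simp [carry]
  have hin : i ≤ n := le_trans hi (Nat.sub_le n 1)
  set p := 3 ^ i with hp
  have hp1 : 1 ≤ p := Nat.one_le_pow _ _ (by norm_num)
  have hdvd : p ∣ 3 ^ n := pow_dvd_pow 3 hin
  have hs : (a + b) % 3 ^ n < 3 ^ n := Nat.mod_lt _ (by positivity)
  have h1 : (3 ^ n - 1 - (a + b) % 3 ^ n) % p = p - 1 - ((a + b) % 3 ^ n) % p :=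
    compl_mod n i _ hin hs
  have h2 : ((a + b) % 3 ^ n) % p = (a % p + b % p) % p := by
    rw [Nat.mod_mod_of_dvd _ hdvd, Nat.add_mod]
  unfold carry
  rw [← hp, h1, h2]
  set A := a % p with hA
  set B := b % p with hB
  have hAp : A < p := Nat.mod_lt _ (by omega)
  have hBp : B < p := Nat.mod_lt _ (by omega)
  set c := (A + B) / p with hc
  set m := (A + B) % p with hm
  have hmc : p * c + m = A + B := Nat.div_add_mod _ _
  have hmp : m < p := Nat.mod_lt _ (by omega)
  have hc1 : c ≤ 1 := by
    by_contra h
    have : 2 * p ≤ p * c := by nlinarith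
    omega
  interval_cases c
  · exact Nat.div_eq_of_lt (by omega)
  · have : p - 1 - m + A = (p - 1 - B) + p := by omega
    rw [this, Nat.add_div_right _ (by omega), Nat.div_eq_of_lt (by omega)]
end
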